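/- For every x > √(√2 - 1), the Mills ratio of the standard normal distribution satisfies m(x) < x(x² + 1)/(x⁴ + 2x² - 1). -/

import Mathlib

open Real MeasureTheory Set

/-- The Mills ratio of the standard normal distribution:
`m x = e^{x²/2} ∫_x^∞ e^{-t²/2} dt`. -/
noncomputable def millsRatio (x : ℝ) : ℝ :=
  Real.exp (x ^ 2 / 2) * ∫ t in Set.Ioi x, Real.exp (-t ^ 2 / 2)

noncomputable def Ffn (t : ℝ) : ℝ := (t^3 + t) / (t^4 + 2*t^2 - 1) * Real.exp (-t^2/2)
noncomputable def gfn (t : ℝ) : ℝ := 8 * t^2 / (t^4 + 2*t^2 - 1)^2 * Real.exp (-t^2/2)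

lemma Ffn_deriv {t : ℝ} (hD : t^4 + 2*t^2 - 1 ≠ 0) :
    HasDerivAt Ffn (-(Real.exp (-t^2/2)) - gfn t) t := by
  have h1 : HasDerivAt (fun t : ℝ => t^3 + t) (3*t^2 + 1) t := by
    exact ((hasDerivAt_pow 3 t).add (hasDerivAt_id t)).congr_deriv (by norm_num)
  have h2 : HasDerivAt (fun t : ℝ => t^4 + 2*t^2 - 1) (4*t^3 + 4*t) t := by
    have := ((hasDerivAt_pow 4 t).add (((hasDerivAt_pow 2 t).const_mul 2))).sub_const 1
    exact this.congr_deriv (by push_cast; ring)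
  have h3 : HasDerivAt (fun t : ℝ => -t^2/2) (-t) t := by
    have := ((hasDerivAt_pow 2 t).neg).div_const 2
    exact this.congr_deriv (by push_cast; ring)
  have h4 : HasDerivAt (fun t : ℝ => Real.exp (-t^2/2)) (Real.exp (-t^2/2) * (-t)) t := h3.exp
  have h5 := (h1.div h2 hD).mul h4
  refine h5.congr_deriv ?_
  unfold gfn
  simp only [Pi.div_apply]
  have hD' : t ^ 2 * (t ^ 2 + 2) - 1 ≠ 0 := by convert hD using 1; ring
  field_simp
  ring

lemma Ffn_tendsto : Filter.Tendsto Ffn Filter.atTop (nhds 0) := by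
  apply squeeze_zero' (f := Ffn) (g := fun t => 2 * (t^3 * Real.exp (-t)))
  · filter_upwards [Filter.eventually_ge_atTop (2:ℝ)] with t ht
    have hD : 0 < t^4 + 2*t^2 - 1 := by nlinarith
    have : 0 ≤ t^3 + t := by nlinarith
    unfold Ffn; positivity
  · filter_upwards [Filter.eventually_ge_atTop (2:ℝ)] with t ht
    have hD : (1:ℝ) ≤ t^4 + 2*t^2 - 1 := by nlinarith
    have hN : t^3 + t ≤ 2 * t^3 := by nlinarith
    have he : Real.exp (-t^2/2) ≤ Real.exp (-t) := by
      apply Real.exp_le_exp.2; nlinarith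
    have hN0 : 0 ≤ t^3 + t := by nlinarith
    calc (t^3 + t) / (t^4 + 2*t^2 - 1) * Real.exp (-t^2/2)
        ≤ (t^3 + t) / 1 * Real.exp (-t^2/2) := by
          apply mul_le_mul_of_nonneg_right _ (Real.exp_pos _).le
          exact div_le_div_of_nonneg_left hN0 one_pos hD |>.trans_eq rfl
      _ = (t^3 + t) * Real.exp (-t^2/2) := by rw [div_one]
      _ ≤ 2 * t^3 * Real.exp (-t) := by
          apply mul_le_mul hN he (Real.exp_pos _).le (by nlinarith)
      _ = 2 * (t^3 * Real.exp (-t)) := by ring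
  · have := (Real.tendsto_pow_mul_exp_neg_atTop_nhds_zero 3).const_mul 2
    simpa using this

lemma exp_int (x : ℝ) : IntegrableOn (fun t : ℝ => Real.exp (-t^2/2)) (Ioi x) := by
  have h : (fun t : ℝ => Real.exp (-t^2/2)) = fun t : ℝ => Real.exp (-(1/2) * t^2) := by
    funext t; congr 1; ring
  rw [h]
  exact (integrable_exp_neg_mul_sq (by norm_num)).integrableOn

lemma gfn_int {x : ℝ} (hx0 : 0 < x) (hDx : 0 < x^4 + 2*x^2 - 1) :
    IntegrableOn gfn (Ioi x) := by
  have hD : ∀ t : ℝ, x ≤ t → 0 < t^4 + 2*t^2 - 1 := by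
    intro t ht
    have h2 : x^2 ≤ t^2 := by nlinarith
    have h4 : x^4 ≤ t^4 := by nlinarith
    linarith
  have hbd : IntegrableOn (fun t : ℝ => (8 * (x^4 + 2*x^2 - 1 + 1) / (x^4 + 2*x^2 - 1)^2) * Real.exp (-t^2/2)) (Ioi x) :=
    (exp_int x).const_mul _
  apply hbd.mono'
  · apply ContinuousOn.aestronglyMeasurable _ measurableSet_Ioi
    apply ContinuousOn.mul
    · apply ContinuousOn.div (by fun_prop) (by fun_prop)
      intro t ht
      exact pow_ne_zero 2 (hD t (le_of_lt ht)).ne'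
    · fun_prop
  · filter_upwards [ae_restrict_mem measurableSet_Ioi] with t ht
    have ht' : x < t := ht
    have hDt : 0 < t^4 + 2*t^2 - 1 := hD t ht'.le
    have hDle : x^4 + 2*x^2 - 1 ≤ t^4 + 2*t^2 - 1 := by
      have h2 : x^2 ≤ t^2 := by nlinarith
      have h4 : x^4 ≤ t^4 := by nlinarith
      linarith
    have ht2 : t^2 ≤ (t^4 + 2*t^2 - 1) + 1 := by nlinarith
    rw [Real.norm_eq_abs, abs_of_nonneg (by unfold gfn; positivity)]
    unfold gfn
    apply mul_le_mul_of_nonneg_right _ (Real.exp_pos _).le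
    rw [div_le_div_iff₀ (by positivity) (by positivity)]
    nlinarith [sq_nonneg (t^4 + 2*t^2 - 1 - (x^4 + 2*x^2 - 1)), mul_pos hDx hDt,
      mul_le_mul_of_nonneg_right hDle (mul_pos hDx hDt).le,
      mul_le_mul_of_nonneg_right ht2 (mul_pos hDx hDx).le]

theorem stmt_17 (x : ℝ) (hx : Real.sqrt (Real.sqrt 2 - 1) < x) :
    millsRatio x < x * (x ^ 2 + 1) / (x ^ 4 + 2 * x ^ 2 - 1) := by
  have hs2 : Real.sqrt 2 ^ 2 = 2 := Real.sq_sqrt (by norm_num)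
  have h21 : (1:ℝ) < Real.sqrt 2 := by nlinarith [Real.sqrt_nonneg 2]
  have hx0 : 0 < x := lt_of_le_of_lt (Real.sqrt_nonneg _) hx
  have hx2 : Real.sqrt 2 - 1 < x ^ 2 := by
    have h := Real.sq_sqrt (show (0:ℝ) ≤ Real.sqrt 2 - 1 by linarith)
    nlinarith [Real.sqrt_nonneg (Real.sqrt 2 - 1)]
  have hDx : 0 < x^4 + 2*x^2 - 1 := by nlinarith [Real.sqrt_nonneg 2]
  have hD : ∀ t : ℝ, x ≤ t → 0 < t^4 + 2*t^2 - 1 := by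
    intro t ht
    have h2 : x^2 ≤ t^2 := by nlinarith
    have h4 : x^4 ≤ t^4 := by nlinarith
    linarith
  -- FTC
  have hint : IntegrableOn (fun t => -(Real.exp (-t^2/2)) - gfn t) (Ioi x) :=
    (exp_int x).neg.sub (gfn_int hx0 hDx)
  have hftc : ∫ t in Ioi x, (-(Real.exp (-t^2/2)) - gfn t) = 0 - Ffn x := by
    apply integral_Ioi_of_hasDerivAt_of_tendsto' (f := Ffn) _ hint Ffn_tendsto
    intro t ht
    exact Ffn_deriv (hD t ht).ne'
  have hsplit : ∫ t in Ioi x, (-(Real.exp (-t^2/2)) - gfn t)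
      = -(∫ t in Ioi x, Real.exp (-t^2/2)) - ∫ t in Ioi x, gfn t := by
    have h1 : IntegrableOn (fun t : ℝ => -(Real.exp (-t^2/2))) (Ioi x) := (exp_int x).neg
    rw [integral_sub h1 (gfn_int hx0 hDx), integral_neg]
  have hgpos : 0 < ∫ t in Ioi x, gfn t := by
    have hnn : 0 ≤ᵐ[volume.restrict (Ioi x)] gfn := by
      filter_upwards [ae_restrict_mem measurableSet_Ioi] with t ht
      have hDt := hD t (le_of_lt ht)
      unfold gfn; positivity
    rw [setIntegral_pos_iff_support_of_nonneg_ae hnn (gfn_int hx0 hDx)]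
    have hsub : Ioi x ⊆ Function.support gfn ∩ Ioi x := by
      intro t ht
      refine ⟨?_, ht⟩
      have hDt := hD t (le_of_lt ht)
      have : 0 < gfn t := by
        unfold gfn
        have ht0 : 0 < t := lt_trans hx0 ht
        positivity
      exact this.ne'
    calc (0:ENNReal) < volume (Ioi x) := by rw [Real.volume_Ioi]; exact ENNReal.zero_lt_top
      _ ≤ volume (Function.support gfn ∩ Ioi x) := measure_mono hsub
  have hI : (∫ t in Ioi x, Real.exp (-t^2/2)) < Ffn x := by
    rw [hsplit] at hftc
    linarith
  have hkey : millsRatio x < Real.exp (x^2/2) * Ffn x := by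
    unfold millsRatio
    exact mul_lt_mul_of_pos_left hI (Real.exp_pos _)
  calc millsRatio x < Real.exp (x^2/2) * Ffn x := hkey
    _ = x * (x ^ 2 + 1) / (x ^ 4 + 2 * x ^ 2 - 1) := by
        unfold Ffn
        have he : Real.exp (x^2/2) * Real.exp (-x^2/2) = 1 := by
          rw [← Real.exp_add, show x^2/2 + -x^2/2 = 0 by ring, Real.exp_zero]
        calc Real.exp (x^2/2) * ((x^3 + x) / (x^4 + 2*x^2 - 1) * Real.exp (-x^2/2))
            = (x^3 + x) / (x^4 + 2*x^2 - 1) * (Real.exp (x^2/2) * Real.exp (-x^2/2)) := by ring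
          _ = (x^3 + x) / (x^4 + 2*x^2 - 1) := by rw [he, mul_one]
          _ = x * (x ^ 2 + 1) / (x ^ 4 + 2 * x ^ 2 - 1) := by ring_nf
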